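/- Let L = se₂(3) × se₂(3) (pairs (W, T) of velocity and bias-derivative inputs) and let D = SE₂(3) ⋉ se₂(3) be the group with product (C_X, γ_X)(C_Y, γ_Y) = (C_X C_Y, γ_X + C_X γ_Y C_X⁻¹). For C ∈ SE₂(3) with blocks (A, a, b), let Ω(C) ∈ se₂(3) be the element [[0₃ₓ₃, 0, a], [0₁ₓ₃, 0, 0], [0₁ₓ₃, 0, 0]] (ω-block zero, u-column zero, v-column equal to the velocity column a of C). Then the map ψ : D × L → L defined by ψ((C, γ), (W, T)) = (C⁻¹ (W − γ) C + Ω(C⁻¹), C⁻¹ T C) is a right group action of D on L; that is, ψ((I, 0), (W, T)) = (W, T) and ψ(X, ψ(Y, (W, T))) = ψ(Y X, (W, T)) for all X, Y ∈ D. -/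

import Mathlib

open Matrix

noncomputable section

abbrev V3 := Fin 3 → ℝ
abbrev Mat3 := Matrix (Fin 3) (Fin 3) ℝ
abbrev Mat5 := Matrix (Fin 5) (Fin 5) ℝ

/-- `SO(3)`: real 3×3 matrices with `Rᵀ R = I` and `det R = 1`. -/
def SO3 (A : Mat3) : Prop := Aᵀ * A = 1 ∧ A.det = 1

/-- The 5×5 block matrix `[[A, a, b], [0, 1, 0], [0, 0, 1]]`. -/
def se23mk (A : Mat3) (a b : V3) : Mat5 :=
  Matrix.of fun i j =>
    if hi : (i : ℕ) < 3 then
      if hj : (j : ℕ) < 3 then A ⟨(i : ℕ), hi⟩ ⟨(j : ℕ), hj⟩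
      else if (j : ℕ) = 3 then a ⟨(i : ℕ), hi⟩ else b ⟨(i : ℕ), hi⟩
    else if (i : ℕ) = (j : ℕ) then 1 else 0

/-- `SE₂(3)`: 5×5 block matrices `[[A, a, b], [0, 1, 0], [0, 0, 1]]` with `A ∈ SO(3)`. -/
def SE23 (C : Mat5) : Prop := ∃ (A : Mat3) (a b : V3), SO3 A ∧ C = se23mk A a b

/-- `x^∧`: the 3×3 skew-symmetric matrix with `x^∧ y = x × y`. -/
def wedge (x : V3) : Mat3 :=
  !![0, -x 2, x 1; x 2, 0, -x 0; -x 1, x 0, 0]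

/-- The 5×5 block matrix `[[ω^∧, u, v], [0, 0, 0], [0, 0, 0]]`. -/
def se23algMk (ω u v : V3) : Mat5 :=
  Matrix.of fun i j =>
    if hi : (i : ℕ) < 3 then
      if hj : (j : ℕ) < 3 then wedge ω ⟨(i : ℕ), hi⟩ ⟨(j : ℕ), hj⟩
      else if (j : ℕ) = 3 then u ⟨(i : ℕ), hi⟩ else v ⟨(i : ℕ), hi⟩
    else 0

/-- `se₂(3)`: 5×5 block matrices `[[ω^∧, u, v], [0, 0, 0], [0, 0, 0]]`. -/
def se23Alg (M : Mat5) : Prop := ∃ ω u v : V3, M = se23algMk ω u v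

/-- The product of the Tangent group `D = SE₂(3) ⋉ se₂(3)`:
`(C_X, γ_X)(C_Y, γ_Y) = (C_X C_Y, γ_X + C_X γ_Y C_X⁻¹)`. -/
def tgMul (X Y : Mat5 × Mat5) : Mat5 × Mat5 :=
  (X.1 * Y.1, X.2 + X.1 * Y.2 * X.1⁻¹)

/-- `Ω(C) ∈ se₂(3)`: the element `[[0₃ₓ₃, 0, a], [0₁ₓ₃, 0, 0], [0₁ₓ₃, 0, 0]]` where
`a` is the velocity column (fourth column) of `C`. -/
def OmegaM (C : Mat5) : Mat5 :=
  se23algMk 0 0 (fun i => C (Fin.castLE (by norm_num) i) 3)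

/-- The action `ψ((C, γ), (W, T)) = (C⁻¹ (W − γ) C + Ω(C⁻¹), C⁻¹ T C)` of
`D = SE₂(3) ⋉ se₂(3)` on the input space `L = se₂(3) × se₂(3)`. -/
def psiTG (C γ W T : Mat5) : Mat5 × Mat5 :=
  (C⁻¹ * (W - γ) * C + OmegaM C⁻¹, C⁻¹ * T * C)

/-! The translation part of `ψ` is twisted by `Ω ∘ inv`, so the action law reduces to `Ω` being a
1-cocycle for conjugation on `SE₂(3)`: `Ω(C D) = C Ω(D) C⁻¹ + Ω(C)`. This holds because the velocity
column of `C D` is `A a' + a`, while a matrix of the shape `Ω(·)` is fixed by right multiplication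
with any element of `SE₂(3)`. -/

lemma se23mk_one : se23mk 1 0 0 = (1 : Mat5) := by
  ext i j; fin_cases i <;> fin_cases j <;> simp [se23mk, Matrix.one_apply]

lemma se23mk_mul_se23mk (A A' : Mat3) (a b a' b' : V3) :
    se23mk A a b * se23mk A' a' b' = se23mk (A * A') (A *ᵥ a' + a) (A *ᵥ b' + b) := by
  ext i j
  fin_cases i <;> fin_cases j <;>
    simp [se23mk, Matrix.mul_apply, Matrix.mulVec, dotProduct, Fin.sum_univ_five,
      Fin.sum_univ_three]

lemma se23mk_mul_se23algMk (A : Mat3) (a b v : V3) :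
    se23mk A a b * se23algMk 0 0 v = se23algMk 0 0 (A *ᵥ v) := by
  ext i j
  fin_cases i <;> fin_cases j <;>
    simp [se23mk, se23algMk, wedge, Matrix.mul_apply, Matrix.mulVec, dotProduct,
      Fin.sum_univ_five, Fin.sum_univ_three]

lemma se23algMk_mul_se23mk (v : V3) (A : Mat3) (a b : V3) :
    se23algMk 0 0 v * se23mk A a b = se23algMk 0 0 v := by
  ext i j
  fin_cases i <;> fin_cases j <;>
    simp [se23mk, se23algMk, wedge, Matrix.mul_apply, Fin.sum_univ_five]

lemma se23algMk_add (v w : V3) :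
    se23algMk 0 0 v + se23algMk 0 0 w = se23algMk 0 0 (v + w) := by
  ext i j
  fin_cases i <;> fin_cases j <;> simp [se23algMk, wedge]

lemma se23algMk_zero : se23algMk 0 0 0 = 0 := by
  ext i j
  fin_cases i <;> fin_cases j <;> simp [se23algMk, wedge]

lemma OmegaM_se23mk (A : Mat3) (a b : V3) : OmegaM (se23mk A a b) = se23algMk 0 0 a := by
  unfold OmegaM
  congr 1
  ext i
  fin_cases i <;> simp [se23mk]

lemma OmegaM_one : OmegaM 1 = 0 := by
  rw [← se23mk_one, OmegaM_se23mk, se23algMk_zero]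

lemma se23mk_mul_se23mk_transpose {A : Mat3} (a b : V3) (hA : Aᵀ * A = 1) :
    se23mk A a b * se23mk Aᵀ (-(Aᵀ *ᵥ a)) (-(Aᵀ *ᵥ b)) = 1 := by
  have hA' : A * Aᵀ = 1 := mul_eq_one_comm.mpr hA
  simp [se23mk_mul_se23mk, Matrix.mulVec_neg, Matrix.mulVec_mulVec, hA', se23mk_one]

lemma inv_se23mk {A : Mat3} (a b : V3) (hA : Aᵀ * A = 1) :
    (se23mk A a b)⁻¹ = se23mk Aᵀ (-(Aᵀ *ᵥ a)) (-(Aᵀ *ᵥ b)) :=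
  Matrix.inv_eq_right_inv (se23mk_mul_se23mk_transpose a b hA)

namespace SE23

variable {C : Mat5}

theorem isUnit_det (hC : SE23 C) : IsUnit C.det := by
  obtain ⟨A, a, b, hA, rfl⟩ := hC
  exact Matrix.isUnit_det_of_right_inverse (se23mk_mul_se23mk_transpose a b hA.1)

theorem inv (hC : SE23 C) : SE23 C⁻¹ := by
  obtain ⟨A, a, b, ⟨hA, hdet⟩, rfl⟩ := hC
  exact ⟨Aᵀ, _, _, ⟨by rw [transpose_transpose, mul_eq_one_comm.mpr hA], by rwa [det_transpose]⟩,
    inv_se23mk a b hA⟩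

end SE23

theorem OmegaM_mul {C D : Mat5} (hC : SE23 C) (hD : SE23 D) :
    OmegaM (C * D) = C * OmegaM D * C⁻¹ + OmegaM C := by
  obtain ⟨A, a, b, hA, rfl⟩ := hC
  obtain ⟨A', a', b', -, rfl⟩ := hD
  rw [inv_se23mk a b hA.1, se23mk_mul_se23mk, OmegaM_se23mk, OmegaM_se23mk, OmegaM_se23mk,
    se23mk_mul_se23algMk, se23algMk_mul_se23mk, se23algMk_add]

theorem conj_sub_conj_of_mul_eq_one {R : Type*} [Ring R] {P Q C D : R} (W γ γ' : R) (h : Q * C = 1) :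
    P * (Q * (W - γ) * C - γ') * D = P * Q * (W - (γ + C * γ' * Q)) * (C * D) := by
  calc P * (Q * (W - γ) * C - γ') * D
      = P * Q * (W - γ) * (C * D) - P * (Q * C) * γ' * (Q * C) * D := by rw [h]; noncomm_ring
    _ = P * Q * (W - (γ + C * γ' * Q)) * (C * D) := by noncomm_ring

/-- `ψ` is a right group action of `D = SE₂(3) ⋉ se₂(3)` on `L = se₂(3) × se₂(3)`:
`ψ((I, 0), (W, T)) = (W, T)` and `ψ(X, ψ(Y, (W, T))) = ψ(Y X, (W, T))`. -/
theorem stmt7 :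
    -- identity axiom: ψ((I₅, 0), (W, T)) = (W, T)
    (∀ (W T : Mat5), se23Alg W → se23Alg T → psiTG 1 0 W T = (W, T)) ∧
    -- compatibility axiom: ψ(X, ψ(Y, u)) = ψ(Y X, u)
    (∀ (CX γX CY γY W T : Mat5),
      SE23 CX → se23Alg γX → SE23 CY → se23Alg γY → se23Alg W → se23Alg T →
      psiTG CX γX (psiTG CY γY W T).1 (psiTG CY γY W T).2
        = psiTG (tgMul (CY, γY) (CX, γX)).1 (tgMul (CY, γY) (CX, γX)).2 W T) := by
  refine ⟨fun W T _ _ => by simp [psiTG, OmegaM_one], ?_⟩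
  rintro CX γX CY γY W T hX - hY - - -
  have hYinv : CY⁻¹ * CY = 1 := nonsing_inv_mul CY hY.isUnit_det
  simp only [psiTG, tgMul, Matrix.mul_inv_rev, OmegaM_mul hX.inv hY.inv,
    nonsing_inv_nonsing_inv CX hX.isUnit_det, Prod.mk.injEq]
  constructor
  · rw [← conj_sub_conj_of_mul_eq_one W γY γX hYinv]
    noncomm_ring
  · simp only [mul_assoc]
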